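/- For a vector space V over a field of characteristic zero, the image of the left-normed bracketing map V^{⊗n} → T(V), v₁⊗···⊗vₙ ↦ [...[v₁,v₂],...,vₙ], equals the degree-n homogeneous component Lₙ(V) of the free Lie algebra on V, viewed inside the tensor algebra via the canonical embedding. -/

import Mathlib

/-!
Let `D` be the Dynkin operator on `T(V)`: `D 1 = 0` and `D (x v) = [D x, v] + ε(x) v`, where `ε`
is the augmentation. It sends `v₁ ⋯ vₙ` to `[...[v₁, v₂], ..., vₙ]`, so `w` agrees with `D` on
`V^{⊗n}` and the image is spanned by left-normed brackets, which lie in `Lₙ(V)`. Conversely,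
`D (u a) = [D u, a]` whenever `ε(u) = 0` and `a` is a Lie element; with the Leibniz rule for the
Euler derivation `E` this shows `D = E` on Lie elements, and `E = n` on `V^{⊗n}`. Hence every
`x ∈ Lₙ(V)` is `D (x / n)` (Dynkin–Specht–Wever).
-/

/-- The left-normed iterated commutator `[...[[a₁,a₂],a₃],...,aₙ]` of a list,
with `[a,b] = a*b - b*a`; `0` for the empty list. -/
def lnbList {A : Type*} [Ring A] : List A → A
  | [] => 0
  | a :: l => l.foldl (fun x y => x * y - y * x) a

attribute [local instance 100] LieRing.ofAssociativeRing

section lnbList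

variable {R A : Type*} [CommRing R] [Ring A] [Algebra R A]

lemma lnbList_append_singleton {l : List A} (hl : l ≠ []) (a : A) :
    lnbList (l ++ [a]) = ⁅lnbList l, a⁆ := by
  obtain ⟨b, l, rfl⟩ := List.exists_cons_of_ne_nil hl
  simp [lnbList, List.foldl_append, Ring.lie_def]

lemma lnbList_mem_lieSubalgebra (L : LieSubalgebra R A) {l : List A} (hl : ∀ a ∈ l, a ∈ L) :
    lnbList l ∈ L := by
  induction l using List.reverseRecOn with
  | nil => exact L.zero_mem
  | append_singleton l a ih =>
    rcases eq_or_ne l [] with rfl | hne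
    · simpa [lnbList] using hl a
    · rw [lnbList_append_singleton hne]
      exact L.lie_mem (ih fun b hb => hl b (by simp [hb])) (hl a (by simp))

lemma lnbList_mem_pow (M : Submodule R A) {l : List A} (hl : ∀ a ∈ l, a ∈ M) :
    lnbList l ∈ M ^ l.length := by
  induction l using List.reverseRecOn with
  | nil => exact zero_mem _
  | append_singleton l a ih =>
    rcases eq_or_ne l [] with rfl | hne
    · simpa [lnbList] using hl a
    · have hl' := ih fun b hb => hl b (by simp [hb])
      have ha := hl a (by simp)
      rw [lnbList_append_singleton hne, Ring.lie_def, List.length_append, List.length_singleton]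
      exact sub_mem (pow_succ M _ ▸ Submodule.mul_mem_mul hl' ha)
        (pow_succ' M _ ▸ Submodule.mul_mem_mul ha hl')

end lnbList

namespace TensorAlgebra

open MulOpposite

section Dynkin

variable {k V : Type*} [CommRing k] [AddCommGroup V] [Module k V]

local notation "T" => TensorAlgebra k V

@[simp] lemma algebraMapInv_ι (v : V) : algebraMapInv (ι k v) = 0 := by
  simp [algebraMapInv]

noncomputable def dynkinStep : V →ₗ[k] Module.End k (T × T) :=
  LinearMap.mk₂ k (fun v p => (p.1 * ι k v, ⁅p.2, ι k v⁆ + algebraMapInv p.1 • ι k v))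
    (fun v w p => by ext <;> simp [mul_add]; abel)
    (fun c v p => by ext <;> simp [smul_add, smul_comm c, Ring.lie_def, smul_sub])
    (fun v p q => by ext <;> simp [add_mul, add_smul]; abel)
    (fun c v p => by ext <;> simp [smul_add, mul_smul])

/-- The right action of `T(V)` on pairs `(x, d)` generated by
`(x, d) · v = (x v, [d, v] + ε(x) v)`; the second coordinate of `(1, 0) · x` is the Dynkin
operator of `x`. -/
noncomputable def dynkinAux : T →ₐ[k] (Module.End k (T × T))ᵐᵒᵖ :=
  lift k ((opLinearEquiv k).toLinearMap ∘ₗ dynkinStep)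

noncomputable def dynkin : T →ₗ[k] T :=
  LinearMap.snd k T T ∘ₗ LinearMap.applyₗ (1, 0) ∘ₗ (opLinearEquiv k).symm.toLinearMap ∘ₗ
    dynkinAux.toLinearMap

lemma dynkinAux_ι (v : V) (p : T × T) :
    (dynkinAux (ι k v)).unop p =
      (p.1 * ι k v, ⁅p.2, ι k v⁆ + algebraMapInv p.1 • ι k v) := by
  simp [dynkinAux, dynkinStep]

lemma fst_dynkinAux (x : T) (p : T × T) : ((dynkinAux x).unop p).1 = p.1 * x := by
  induction x using TensorAlgebra.induction generalizing p with
  | algebraMap r => simp [Algebra.commutes, Algebra.smul_def]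
  | ι v => simp [dynkinAux_ι]
  | mul a b ha hb => simp [Module.End.mul_apply, ha, hb, mul_assoc]
  | add a b ha hb => simp [ha, hb, mul_add]

lemma dynkin_mul_ι (x : T) (v : V) :
    dynkin (x * ι k v) = ⁅dynkin x, ι k v⁆ + algebraMapInv x • ι k v := by
  simp [dynkin, Module.End.mul_apply, dynkinAux_ι, fst_dynkinAux]

@[simp] lemma dynkin_one : dynkin (1 : T) = 0 := by
  simp [dynkin]

lemma algebraMapInv_eq_zero_of_mem_lieSpan {a : T}
    (ha : a ∈ LieSubalgebra.lieSpan k T (Set.range (ι k))) : algebraMapInv a = 0 := by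
  induction ha using LieSubalgebra.lieSpan_induction with
  | mem _ h => obtain ⟨v, rfl⟩ := h; simp
  | zero => simp
  | add _ _ _ _ ha hb => simp [ha, hb]
  | smul _ _ _ ha => simp [ha]
  | lie _ _ _ _ ha hb => simp [Ring.lie_def, ha]

lemma dynkin_mul_of_mem_lieSpan {u a : T} (hu : algebraMapInv u = 0)
    (ha : a ∈ LieSubalgebra.lieSpan k T (Set.range (ι k))) :
    dynkin (u * a) = ⁅dynkin u, a⁆ := by
  induction ha using LieSubalgebra.lieSpan_induction generalizing u with
  | mem _ h => obtain ⟨v, rfl⟩ := h; simp [dynkin_mul_ι, hu]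
  | zero => simp
  | add _ _ _ _ ha hb => simp [mul_add, ha hu, hb hu]
  | smul _ _ _ ha => simp [ha hu]
  | lie a b _ _ ha hb =>
    have hua : algebraMapInv (u * a) = 0 := by simp [hu]
    have hub : algebraMapInv (u * b) = 0 := by simp [hu]
    rw [Ring.lie_def, mul_sub, ← mul_assoc, ← mul_assoc, map_sub, hb hua, ha hub, ha hu, hb hu]
    simp only [Ring.lie_def]
    noncomm_ring

lemma dynkin_list_prod {l : List T} (hl : ∀ a ∈ l, a ∈ LinearMap.range (ι k)) :
    dynkin l.prod = lnbList l := by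
  induction l using List.reverseRecOn with
  | nil => simp [lnbList]
  | append_singleton l a ih =>
    obtain ⟨v, rfl⟩ := hl a (by simp)
    rw [List.prod_append, List.prod_singleton, dynkin_mul_ι, ih fun b hb => hl b (by simp [hb])]
    rcases eq_or_ne l [] with rfl | hne
    · simp [lnbList]
    · have hprod : algebraMapInv l.prod = 0 := by
        obtain ⟨b, hb⟩ := List.exists_mem_of_ne_nil l hne
        obtain ⟨w, rfl⟩ := hl b (by simp [hb])
        rw [map_list_prod]
        exact List.prod_eq_zero (List.mem_map.2 ⟨_, hb, by simp⟩)
      rw [hprod, zero_smul, add_zero, lnbList_append_singleton hne]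

/-- `v ↦ v + v t` into `T(V)[t]/(t²)`; the `t`-coefficient is the Euler derivation, which
multiplies degree-`n` elements by `n`. -/
noncomputable def eulerAux : T →ₐ[k] DualNumber T :=
  lift k ((TrivSqZeroExt.inlAlgHom k T T).toLinearMap ∘ₗ ι k +
    (TrivSqZeroExt.inrHom T T).restrictScalars k ∘ₗ ι k)

noncomputable def euler : T →ₗ[k] T :=
  (TrivSqZeroExt.sndHom T T).restrictScalars k ∘ₗ eulerAux.toLinearMap

lemma fst_eulerAux (x : T) : (eulerAux x).fst = x := by
  have : (TrivSqZeroExt.fstHom k T T).comp eulerAux = AlgHom.id k T := by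
    ext v; simp [eulerAux]
  exact AlgHom.congr_fun this x

lemma euler_mul (x y : T) : euler (x * y) = euler x * y + x * euler y := by
  simp [euler, TrivSqZeroExt.snd_mul, fst_eulerAux, add_comm]

@[simp] lemma euler_ι (v : V) : euler (ι k v) = ι k v := by
  simp [euler, eulerAux]

lemma euler_of_mem_pow {n : ℕ} {x : T} (hx : x ∈ LinearMap.range (ι k) ^ n) :
    euler x = n • x := by
  induction hx using Submodule.pow_induction_on_right' with
  | algebraMap r => simp [euler, TrivSqZeroExt.algebraMap_eq_inl']
  | add x y i _ _ hx hy => rw [map_add, hx, hy, smul_add]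
  | mul_mem i x _ hx _ hv =>
    obtain ⟨v, rfl⟩ := hv
    rw [euler_mul, hx, euler_ι, smul_mul_assoc, succ_nsmul]

lemma dynkin_eq_euler_of_mem_lieSpan {a : T}
    (ha : a ∈ LieSubalgebra.lieSpan k T (Set.range (ι k))) : dynkin a = euler a := by
  induction ha using LieSubalgebra.lieSpan_induction with
  | mem _ h => obtain ⟨v, rfl⟩ := h; simpa using dynkin_mul_ι (1 : T) v
  | zero => simp
  | add _ _ _ _ ha hb => simp [ha, hb]
  | smul _ _ _ ha => simp [ha]
  | lie a b ha hb iha ihb =>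
    rw [Ring.lie_def, map_sub, map_sub, dynkin_mul_of_mem_lieSpan
      (algebraMapInv_eq_zero_of_mem_lieSpan ha) hb, dynkin_mul_of_mem_lieSpan
      (algebraMapInv_eq_zero_of_mem_lieSpan hb) ha, iha, ihb, euler_mul, euler_mul]
    simp only [Ring.lie_def]
    noncomm_ring

lemma range_ι_pow_eq_span_tprod (n : ℕ) :
    LinearMap.range (ι k (M := V)) ^ n = Submodule.span k (Set.range (tprod k V n)) := by
  rw [Submodule.pow_eq_span_pow_set]
  congr 1
  ext x
  rw [Set.mem_pow]
  constructor
  · rintro ⟨f, rfl⟩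
    choose v hv using fun i => (f i).2
    exact ⟨v, by simp [hv]⟩
  · rintro ⟨v, rfl⟩
    exact ⟨fun i => ⟨ι k (v i), LinearMap.mem_range_self _ _⟩, rfl⟩

end Dynkin

theorem map_dynkin_range_ι_pow {k V : Type*} [Field k] [CharZero k] [AddCommGroup V]
    [Module k V] {n : ℕ} (hn : 0 < n) :
    (LinearMap.range (ι k (M := V)) ^ n).map dynkin =
      (LieSubalgebra.lieSpan k (TensorAlgebra k V) (Set.range (ι k))).toSubmodule ⊓
        LinearMap.range (ι k) ^ n := by
  apply le_antisymm
  · rw [Submodule.map_le_iff_le_comap]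
    conv_lhs => rw [range_ι_pow_eq_span_tprod]
    rw [Submodule.span_le]
    rintro _ ⟨v, rfl⟩
    have hv : ∀ a ∈ List.ofFn fun i => ι k (v i), a ∈ LinearMap.range (ι k) := by simp
    rw [SetLike.mem_coe, Submodule.mem_comap, tprod_apply, dynkin_list_prod hv]
    refine ⟨lnbList_mem_lieSubalgebra _ fun a ha => ?_, by simpa using lnbList_mem_pow _ hv⟩
    obtain ⟨w, rfl⟩ := hv a ha
    exact LieSubalgebra.subset_lieSpan ⟨w, rfl⟩
  · rintro x ⟨hxL, hxP⟩
    have hn' : (n : k) ≠ 0 := by exact_mod_cast hn.ne'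
    refine ⟨(n : k)⁻¹ • x, Submodule.smul_mem _ _ hxP, ?_⟩
    rw [map_smul, dynkin_eq_euler_of_mem_lieSpan hxL, euler_of_mem_pow hxP,
      ← Nat.cast_smul_eq_nsmul k, smul_smul, inv_mul_cancel₀ hn', one_smul]

end TensorAlgebra

theorem stmt2 (k : Type*) [Field k] [CharZero k] (V : Type*) [AddCommGroup V] [Module k V]
    (n : ℕ) (hn : 0 < n)
    (w : TensorAlgebra k V →ₗ[k] TensorAlgebra k V)
    (hw : ∀ v : Fin n → V,
      w ((List.ofFn fun i => TensorAlgebra.ι k (v i)).prod) =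
        lnbList (List.ofFn fun i => TensorAlgebra.ι k (v i))) :
    Submodule.map w
        (LinearMap.range (TensorAlgebra.ι k (M := V)) ^ n) =
      LieSubalgebra.toSubmodule
          (LieSubalgebra.lieSpan k (TensorAlgebra k V)
            (Set.range (TensorAlgebra.ι k (M := V)))) ⊓
        LinearMap.range (TensorAlgebra.ι k (M := V)) ^ n := by
  rw [← TensorAlgebra.map_dynkin_range_ι_pow hn, TensorAlgebra.range_ι_pow_eq_span_tprod,
    Submodule.map_span, Submodule.map_span]
  congr 1
  refine Set.image_congr ?_
  rintro _ ⟨v, rfl⟩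
  rw [TensorAlgebra.tprod_apply, hw, TensorAlgebra.dynkin_list_prod (by simp)]
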